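/- arXiv:math-ph/0103023 — 4 statements merged into one kernel-verified Lean document; each statement's English description precedes it below -/
import Mathlib

section
/- Fix integers n ≥ 2 and N ≥ 1, an open set Ω ⊆ (Fin n → ℂ) on which the coordinate functions λ₁,…,λ_n are pairwise distinct, and differentiable functions A_j : Ω → Matrix (Fin N) (Fin N) ℂ (j = 1,…,n). For x ∈ Ω, λ ∈ ℂ set F(x,λ) = Σ_{j=1}^n A_j(x)/(λ − λ_j(x)) and G_k(x,λ) = −A_k(x)/(λ − λ_k(x)). Then for every x ∈ Ω and every k the following are equivalent: (i) the zero-curvature (compatibility) identity ∂F/∂λ_k (x,λ) − ∂G_k/∂λ (x,λ) + F(x,λ)·G_k(x,λ) − G_k(x,λ)·F(x,λ) = 0 holds for all λ ∈ ℂ ∖ {λ_1(x),…,λ_n(x)} (here ∂/∂λ_k is the partial derivative in the k-th coordinate of x at fixed λ, and ∂/∂λ is the derivative in λ at fixed x); (ii) the Schlesinger equations in the direction λ_k hold at x: ∂A_j/∂λ_k (x) = (A_j(x)A_k(x) − A_k(x)A_j(x))/(λ_j(x) − λ_k(x)) for every j ≠ k, and ∂A_k/∂λ_k (x) = −Σ_{j≠k}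 (A_k(x)A_j(x) − A_j(x)A_k(x))/(λ_k(x) − λ_j(x)). -/
attribute [local instance] Matrix.normedAddCommGroup Matrix.normedSpace

/-- Partial derivative (in the `k`-th coordinate) of a function of `n` complex variables. -/
noncomputable def pdv {n : ℕ} {E : Type*} [NormedAddCommGroup E] [NormedSpace ℂ E]
    (k : Fin n) (f : (Fin n → ℂ) → E) (x : Fin n → ℂ) : E :=
  deriv (fun t : ℂ => f (Function.update x k t)) (x k)

/-- If a combination `∑ j, (lam - x j)⁻¹ • C j` of simple poles at pairwise distinct
points vanishes away from the poles, then all coefficients vanish. -/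
lemma coeff_eq_zero {n : ℕ} {E : Type*} [NormedAddCommGroup E] [NormedSpace ℂ E]
    (x : Fin n → ℂ) (hx : ∀ j l : Fin n, j ≠ l → x j ≠ x l)
    (C : Fin n → E)
    (h : ∀ lam : ℂ, (∀ j, lam ≠ x j) → ∑ j, (lam - x j)⁻¹ • C j = 0)
    (i : Fin n) : C i = 0 := by
  set g : ℂ → E := fun lam =>
    C i + ∑ j ∈ Finset.univ \ {i}, ((lam - x i) * (lam - x j)⁻¹) • C j with hgdef
  have hg : ∀ᶠ lam in nhdsWithin (x i) {x i}ᶜ, g lam = 0 := by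
    have hU : ∀ᶠ lam in nhdsWithin (x i) {x i}ᶜ, ∀ j, lam ≠ x j := by
      have h1 : ∀ᶠ lam in nhds (x i), ∀ j ∈ Finset.univ \ ({i} : Finset (Fin n)),
          lam ≠ x j := by
        rw [Filter.eventually_all_finset]
        intro j hj
        have hji : j ≠ i := by simpa using hj
        exact eventually_ne_nhds (hx i j (fun hh => hji hh.symm))
      filter_upwards [h1.filter_mono nhdsWithin_le_nhds, self_mem_nhdsWithin]
        with lam hl1 hl2 j
      by_cases hji : j = i
      · subst hji; exact hl2
      · exact hl1 j (by simp [hji])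
    filter_upwards [hU, self_mem_nhdsWithin] with lam hlam hne
    have h0 := h lam hlam
    have key : (lam - x i) • ∑ j, (lam - x j)⁻¹ • C j = g lam := by
      rw [Finset.smul_sum, Finset.sum_eq_sum_sdiff_singleton_add (Finset.mem_univ i)]
      simp only [smul_smul]
      rw [mul_inv_cancel₀ (sub_ne_zero.2 (hlam i)), one_smul, add_comm, hgdef]
    rw [← key, h0, smul_zero]
  have hcont : Filter.Tendsto g (nhds (x i)) (nhds (C i)) := by
    have : Filter.Tendsto g (nhds (x i)) (nhds
        (C i + ∑ j ∈ Finset.univ \ {i}, ((x i - x i) * (x i - x j)⁻¹) • C j)) := by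
      apply Filter.Tendsto.add tendsto_const_nhds
      apply tendsto_finset_sum
      intro j hj
      have hji : j ≠ i := by simpa using hj
      have hne : x i - x j ≠ 0 := sub_ne_zero.2 (hx i j (fun hh => hji hh.symm))
      exact (((continuousAt_id.sub continuousAt_const).mul
        ((continuousAt_id.sub continuousAt_const).inv₀ hne)).smul continuousAt_const)
    simpa using this
  have h1 : Filter.Tendsto g (nhdsWithin (x i) {x i}ᶜ) (nhds (C i)) :=
    hcont.mono_left nhdsWithin_le_nhds
  have h2 : Filter.Tendsto g (nhdsWithin (x i) {x i}ᶜ) (nhds 0) :=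
    Filter.Tendsto.congr' (Filter.EventuallyEq.symm hg) tendsto_const_nhds
  exact tendsto_nhds_unique h1 h2

/-- The zero-curvature (compatibility) identity for the Lax pair
`dΨ/dλ = FΨ`, `dΨ/dλ_k = G_kΨ` at a point `x` is equivalent to the Schlesinger
equations in the direction `λ_k` at `x`. -/
theorem compatibility_iff_schlesinger {n N : ℕ} (hn : 2 ≤ n) (hN : 1 ≤ N)
    (Ω : Set (Fin n → ℂ)) (hΩ : IsOpen Ω)
    (hdist : ∀ x ∈ Ω, ∀ j k : Fin n, j ≠ k → x j ≠ x k)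
    (A : Fin n → (Fin n → ℂ) → Matrix (Fin N) (Fin N) ℂ)
    (hA : ∀ j, DifferentiableOn ℂ (A j) Ω)
    (F : (Fin n → ℂ) → ℂ → Matrix (Fin N) (Fin N) ℂ)
    (hF : ∀ x lam, F x lam = ∑ j, (lam - x j)⁻¹ • A j x)
    (G : Fin n → (Fin n → ℂ) → ℂ → Matrix (Fin N) (Fin N) ℂ)
    (hG : ∀ k x lam, G k x lam = -((lam - x k)⁻¹ • A k x))
    (x : Fin n → ℂ) (hx : x ∈ Ω) (k : Fin n) :
    (∀ lam : ℂ, (∀ j : Fin n, lam ≠ x j) →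
        pdv k (fun y => F y lam) x - deriv (fun lam' => G k x lam') lam
          + F x lam * G k x lam - G k x lam * F x lam = 0)
      ↔
    ((∀ j : Fin n, j ≠ k → pdv k (A j) x =
        (x j - x k)⁻¹ • (A j x * A k x - A k x * A j x)) ∧
      pdv k (A k) x =
        -∑ j ∈ Finset.univ \ {k},
          (x k - x j)⁻¹ • (A k x * A j x - A j x * A k x)) := by
  classical
  set C : Fin n → Matrix (Fin N) (Fin N) ℂ := fun j =>
    if j = k then
      pdv k (A k) x + ∑ i ∈ Finset.univ \ {k},
        (x i - x k)⁻¹ • (A i x * A k x - A k x * A i x)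
    else pdv k (A j) x - (x j - x k)⁻¹ • (A j x * A k x - A k x * A j x) with hCdef
  have hsplit : ∀ (M : Fin n → Matrix (Fin N) (Fin N) ℂ),
      ∑ j, M j = (∑ j ∈ Finset.univ \ {k}, M j) + M k := fun M =>
    Finset.sum_eq_sum_sdiff_singleton_add (Finset.mem_univ k) M
  -- differentiability of the coordinate restrictions
  have hAd : ∀ j, HasDerivAt (fun t : ℂ => A j (Function.update x k t))
      (pdv k (A j) x) (x k) := by
    intro j
    have hu : Differentiable ℂ (fun t : ℂ => Function.update x k t) := by
      rw [differentiable_pi]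
      intro i
      simp only [Function.update_apply]
      by_cases hik : i = k
      · simpa [hik] using differentiable_id
      · simpa [hik] using (differentiable_const (x i))
    have hd : DifferentiableAt ℂ (fun t : ℂ => A j (Function.update x k t)) (x k) := by
      apply DifferentiableAt.comp
      · rw [Function.update_eq_self]
        exact (hA j).differentiableAt (hΩ.mem_nhds hx)
      · exact hu.differentiableAt
    exact hd.hasDerivAt
  -- the key identity
  have key : ∀ lam : ℂ, (∀ j : Fin n, lam ≠ x j) →
      pdv k (fun y => F y lam) x - deriv (fun lam' => G k x lam') lam
        + F x lam * G k x lam - G k x lam * F x lam = ∑ j, (lam - x j)⁻¹ • C j := by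
    intro lam hlam
    have hlk : ∀ j, lam - x j ≠ 0 := fun j => sub_ne_zero.2 (hlam j)
    -- derivative in the k-th coordinate of F
    have hFd : pdv k (fun y => F y lam) x =
        (∑ j, (lam - x j)⁻¹ • pdv k (A j) x) + ((lam - x k) ^ 2)⁻¹ • A k x := by
      have hder : HasDerivAt (fun t : ℂ => F (Function.update x k t) lam)
          (∑ j, ((lam - x j)⁻¹ • pdv k (A j) x +
            (if j = k then ((lam - x k) ^ 2)⁻¹ • A k x else 0))) (x k) := by
        simp only [hF]
        apply HasDerivAt.fun_sum
        intro j _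
        by_cases hj : j = k
        · rw [hj]
          simp only [Function.update_self, if_pos]
          have h1 : HasDerivAt (fun t : ℂ => (lam - t)⁻¹)
              (-(-1) / (lam - x k) ^ 2) (x k) :=
            ((hasDerivAt_id (x k)).const_sub lam).inv (hlk k)
          have h2 := h1.smul (hAd k)
          rw [Function.update_eq_self] at h2
          have hsc : (-(-1 : ℂ)) / (lam - x k) ^ 2 = ((lam - x k) ^ 2)⁻¹ := by
            rw [neg_neg, one_div]
          rw [hsc] at h2
          exact h2
        · simp only [Function.update_of_ne hj, if_neg hj, add_zero]
          exact (hAd j).const_smul (lam - x j)⁻¹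
      have hsum : (∑ j, ((lam - x j)⁻¹ • pdv k (A j) x +
            (if j = k then ((lam - x k) ^ 2)⁻¹ • A k x else 0)))
          = (∑ j, (lam - x j)⁻¹ • pdv k (A j) x) + ((lam - x k) ^ 2)⁻¹ • A k x := by
        rw [Finset.sum_add_distrib, Finset.sum_ite_eq' Finset.univ k]
        simp
      rw [hsum] at hder
      exact hder.deriv
    -- derivative in lam of G
    have hGd : deriv (fun lam' => G k x lam') lam = ((lam - x k) ^ 2)⁻¹ • A k x := by
      have h1 : HasDerivAt (fun l : ℂ => (l - x k)⁻¹) (-1 / (lam - x k) ^ 2) lam :=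
        ((hasDerivAt_id lam).sub_const (x k)).inv (hlk k)
      have h2 := (h1.smul_const (A k x)).neg
      have hsc : (-1 : ℂ) / (lam - x k) ^ 2 = -(((lam - x k) ^ 2)⁻¹) := by
        rw [neg_div, one_div]
      rw [hsc, neg_smul, neg_neg] at h2
      have h3 : HasDerivAt (fun lam' => G k x lam') (((lam - x k) ^ 2)⁻¹ • A k x) lam := by
        simp only [hG]
        exact h2
      exact h3.deriv
    rw [hFd, hGd, hF, hG, add_sub_cancel_right, add_sub_assoc]
    -- the commutator part
    have hFG : (∑ j, (lam - x j)⁻¹ • A j x) * -((lam - x k)⁻¹ • A k x)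
        - -((lam - x k)⁻¹ • A k x) * (∑ j, (lam - x j)⁻¹ • A j x)
        = ∑ j, (-((lam - x j)⁻¹ * (lam - x k)⁻¹)) •
            (A j x * A k x - A k x * A j x) := by
      rw [mul_neg, neg_mul, sub_neg_eq_add, Finset.sum_mul, Finset.mul_sum,
        ← Finset.sum_neg_distrib, ← Finset.sum_add_distrib]
      apply Finset.sum_congr rfl
      intro j _
      rw [Matrix.smul_mul, Matrix.mul_smul, Matrix.mul_smul, Matrix.smul_mul,
        smul_smul, smul_smul]
      module
    rw [hFG]
    -- compare the two sides as sums
    rw [hsplit (fun j => (lam - x j)⁻¹ • pdv k (A j) x),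
      hsplit (fun j => (-((lam - x j)⁻¹ * (lam - x k)⁻¹)) •
        (A j x * A k x - A k x * A j x)),
      hsplit (fun j => (lam - x j)⁻¹ • C j)]
    have hDk : A k x * A k x - A k x * A k x = 0 := sub_self _
    rw [hDk, smul_zero, add_zero]
    have hCk : (lam - x k)⁻¹ • C k = (lam - x k)⁻¹ • pdv k (A k) x
        + ∑ i ∈ Finset.univ \ {k},
            ((lam - x k)⁻¹ * (x i - x k)⁻¹) • (A i x * A k x - A k x * A i x) := by
      simp only [hCdef, if_pos]
      rw [smul_add, Finset.smul_sum]
      simp only [smul_smul]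
    have hCj : ∀ j ∈ Finset.univ \ ({k} : Finset (Fin n)),
        (lam - x j)⁻¹ • C j = (lam - x j)⁻¹ • pdv k (A j) x
          - ((lam - x j)⁻¹ * (x j - x k)⁻¹) • (A j x * A k x - A k x * A j x) := by
      intro j hj
      have hjk : j ≠ k := by simpa using hj
      simp only [hCdef, if_neg hjk]
      rw [smul_sub, smul_smul]
    rw [Finset.sum_congr rfl hCj, hCk, Finset.sum_sub_distrib]
    have hscal : ∀ j ∈ Finset.univ \ ({k} : Finset (Fin n)),
        (-((lam - x j)⁻¹ * (lam - x k)⁻¹)) • (A j x * A k x - A k x * A j x)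
          = ((lam - x k)⁻¹ * (x j - x k)⁻¹) • (A j x * A k x - A k x * A j x)
            - ((lam - x j)⁻¹ * (x j - x k)⁻¹) • (A j x * A k x - A k x * A j x) := by
      intro j hj
      have hjk : j ≠ k := by simpa using hj
      have hxjk : x j - x k ≠ 0 := sub_ne_zero.2 (hdist x hx j k hjk)
      have hj1 := hlk j
      have hj2 := hlk k
      rw [← sub_smul]
      congr 1
      field_simp
      ring
    rw [Finset.sum_congr rfl hscal, Finset.sum_sub_distrib]
    abel
  -- a reindexing identity used below
  have hsum_eq : ∑ j ∈ Finset.univ \ {k},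
      (x k - x j)⁻¹ • (A k x * A j x - A j x * A k x)
      = ∑ i ∈ Finset.univ \ {k}, (x i - x k)⁻¹ • (A i x * A k x - A k x * A i x) := by
    apply Finset.sum_congr rfl
    intro j _
    rw [show x k - x j = -(x j - x k) from by ring,
      show A k x * A j x - A j x * A k x = -(A j x * A k x - A k x * A j x) from
        (neg_sub _ _).symm, inv_neg, neg_smul_neg]
  constructor
  · intro h
    have hC0 : ∀ j, C j = 0 := by
      apply coeff_eq_zero x (hdist x hx) C
      intro lam hlam
      rw [← key lam hlam]
      exact h lam hlam
    constructor
    · intro j hj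
      have hj0 := hC0 j
      simp only [hCdef, if_neg hj] at hj0
      exact sub_eq_zero.mp hj0
    · have hk0 := hC0 k
      simp only [hCdef, if_pos] at hk0
      rw [hsum_eq]
      exact eq_neg_of_add_eq_zero_left hk0
  · rintro ⟨h1, h2⟩ lam hlam
    rw [key lam hlam]
    have hC0 : ∀ j, C j = 0 := by
      intro j
      by_cases hj : j = k
      · simp only [hCdef, hj, if_pos]
        rw [h2, hsum_eq, neg_add_cancel]
      · simp only [hCdef, if_neg hj]
        rw [h1 j hj, sub_self]
    simp [hC0]
end

section
/- Fix integers n ≥ 2 and N ≥ 1, an open set Ω ⊆ (Fin n → ℂ) on which the coordinate functions λ₁,…,λ_n are pairwise distinct, and differentiable functions A_j : Ω → Matrix (Fin N) (Fin N) ℂ satisfying the Schlesinger system on Ω: ∂A_j/∂λ_k = [A_j,A_k]/(λ_j−λ_k) for j ≠ k and ∂A_j/∂λ_j = −Σ_{k≠j}[A_j,A_k]/(λ_j−λ_k). For x ∈ Ω and λ ∈ ℂ set G_j(x,λ) = −A_j(x)/(λ − λ_j(x)). Then for all j, k, all x ∈ Ω and all λ ∈ ℂ ∖ {λ_1(x),…,λ_n(x)}: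 ∂G_j/∂λ_k (x,λ) − ∂G_k/∂λ_j (x,λ) + G_j(x,λ)·G_k(x,λ) − G_k(x,λ)·G_j(x,λ) = 0. -/
/-!
For `j ≠ k`, the matrix `G_j = -(λ - λ_j)⁻¹ A_j` depends on `λ_k` only through `A_j`, so the
Schlesinger equation gives `∂G_j/∂λ_k = -[A_j, A_k] / ((λ - λ_j)(λ_j - λ_k))`. Both derivative
terms are then multiples of `[A_j, A_k]`, and the partial fraction identity
`1/((λ - a)(a - b)) - 1/((λ - b)(a - b)) = -1/((λ - a)(λ - b))` makes them cancel `[G_j, G_k]`.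
-/

attribute [local instance] Matrix.normedAddCommGroup Matrix.normedSpace

section Pdv

variable {n : ℕ} {E : Type*} [NormedAddCommGroup E] [NormedSpace ℂ E]

theorem DifferentiableAt.comp_update {f : (Fin n → ℂ) → E} {x : Fin n → ℂ} (m : Fin n)
    (hf : DifferentiableAt ℂ f x) :
    DifferentiableAt ℂ (fun t : ℂ => f (Function.update x m t)) (x m) := by
  rw [← Function.update_eq_self m x] at hf
  exact hf.comp (x m) (hasDerivAt_update x m (x m)).differentiableAt

theorem pdv_neg (k : Fin n) (f : (Fin n → ℂ) → E) (x : Fin n → ℂ) :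
    pdv k (fun y => -f y) x = -pdv k f x :=
  deriv.fun_neg

theorem pdv_smul_of_ne {f : (Fin n → ℂ) → E} {x : Fin n → ℂ} {p m : Fin n} (hpm : p ≠ m)
    (g : ℂ → ℂ) (hf : DifferentiableAt ℂ f x) :
    pdv m (fun y => g (y p) • f y) x = g (x p) • pdv m f x := by
  simp only [pdv, Function.update_of_ne hpm]
  exact deriv_fun_const_smul _ (hf.comp_update m)

end Pdv

theorem zero_curvature_of_partial_fractions {R : Type*} [Ring R] [Algebra ℂ R] {a b lam : ℂ}
    (ha : lam ≠ a) (hb : lam ≠ b) (hab : a ≠ b) (P Q : R) :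
    -((lam - a)⁻¹ • ((a - b)⁻¹ • (P * Q - Q * P)))
        - -((lam - b)⁻¹ • ((b - a)⁻¹ • (Q * P - P * Q)))
        + -((lam - a)⁻¹ • P) * -((lam - b)⁻¹ • Q) - -((lam - b)⁻¹ • Q) * -((lam - a)⁻¹ • P)
      = 0 := by
  have ha' : lam - a ≠ 0 := sub_ne_zero.mpr ha
  have hb' : lam - b ≠ 0 := sub_ne_zero.mpr hb
  have hab' : a - b ≠ 0 := sub_ne_zero.mpr hab
  have hba' : b - a ≠ 0 := sub_ne_zero.mpr hab.symm
  simp only [neg_mul, mul_neg, smul_mul_assoc, mul_smul_comm, smul_smul, smul_sub]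
  match_scalars <;> field_simp <;> ring

theorem deformation_compatibility_general {n N : ℕ}
    (Ω : Set (Fin n → ℂ)) (hΩ : IsOpen Ω)
    (hdist : ∀ x ∈ Ω, ∀ j k : Fin n, j ≠ k → x j ≠ x k)
    (A : Fin n → (Fin n → ℂ) → Matrix (Fin N) (Fin N) ℂ)
    (hA : ∀ j, DifferentiableOn ℂ (A j) Ω)
    (hSch₁ : ∀ x ∈ Ω, ∀ j k : Fin n, j ≠ k →
      pdv k (A j) x = (x j - x k)⁻¹ • (A j x * A k x - A k x * A j x))
    (G : Fin n → (Fin n → ℂ) → ℂ → Matrix (Fin N) (Fin N) ℂ)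
    (hG : ∀ j x lam, G j x lam = -((lam - x j)⁻¹ • A j x)) :
    ∀ j k : Fin n, ∀ x ∈ Ω, ∀ lam : ℂ, (∀ i : Fin n, lam ≠ x i) →
      pdv k (fun y => G j y lam) x - pdv j (fun y => G k y lam) x
        + G j x lam * G k x lam - G k x lam * G j x lam = 0 := by
  intro j k x hx lam hlam
  rcases eq_or_ne j k with rfl | hjk
  · simp
  have hpdvG : ∀ p m, p ≠ m →
      pdv m (fun y => G p y lam) x = -((lam - x p)⁻¹ • pdv m (A p) x) := fun p m hpm => by
    simp only [hG, pdv_neg]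
    exact congrArg Neg.neg <| pdv_smul_of_ne hpm (fun z => (lam - z)⁻¹)
      ((hA p).differentiableAt (hΩ.mem_nhds hx))
  rw [hpdvG j k hjk, hpdvG k j hjk.symm, hSch₁ x hx j k hjk, hSch₁ x hx k j hjk.symm, hG, hG]
  exact zero_curvature_of_partial_fractions (hlam j) (hlam k) (hdist x hx j k hjk) _ _

/-- For a solution of the Schlesinger system, the deformation equations
`dΨ/dλ_j = G_jΨ` are compatible among themselves:
`∂G_j/∂λ_k − ∂G_k/∂λ_j + [G_j, G_k] = 0`. -/
theorem deformation_compatibility {n N : ℕ} (hn : 2 ≤ n) (hN : 1 ≤ N)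
    (Ω : Set (Fin n → ℂ)) (hΩ : IsOpen Ω)
    (hdist : ∀ x ∈ Ω, ∀ j k : Fin n, j ≠ k → x j ≠ x k)
    (A : Fin n → (Fin n → ℂ) → Matrix (Fin N) (Fin N) ℂ)
    (hA : ∀ j, DifferentiableOn ℂ (A j) Ω)
    (hSch₁ : ∀ x ∈ Ω, ∀ j k : Fin n, j ≠ k →
      pdv k (A j) x = (x j - x k)⁻¹ • (A j x * A k x - A k x * A j x))
    (hSch₂ : ∀ x ∈ Ω, ∀ j : Fin n,
      pdv j (A j) x = -∑ k ∈ Finset.univ \ {j},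
        (x j - x k)⁻¹ • (A j x * A k x - A k x * A j x))
    (G : Fin n → (Fin n → ℂ) → ℂ → Matrix (Fin N) (Fin N) ℂ)
    (hG : ∀ j x lam, G j x lam = -((lam - x j)⁻¹ • A j x)) :
    ∀ j k : Fin n, ∀ x ∈ Ω, ∀ lam : ℂ, (∀ i : Fin n, lam ≠ x i) →
      pdv k (fun y => G j y lam) x - pdv j (fun y => G k y lam) x
        + G j x lam * G k x lam - G k x lam * G j x lam = 0 :=
  deformation_compatibility_general Ω hΩ hdist A hA hSch₁ G hG
end

section
/- Fix integers n ≥ 2 and N ≥ 1, an open set Ω ⊆ (Fin n → ℂ) on which the coordinate functions λ₁,…,λ_n are pairwise distinct, and differentiable functions A_j : Ω → Matrix (Fin N) (Fin N) ℂ whose first partial derivatives are again differentiable, satisfying the Schlesinger system on Ω: ∂A_j/∂λ_k = [A_j,A_k]/(λ_j−λ_k) for j ≠ k and ∂A_j/∂λ_j = −Σ_{k≠j}[A_j,A_k]/(λ_j−λ_k). Define H_j : Ω → ℂ by H_j = Σ_{k≠j} tr(A_j A_k)/(λ_j − λ_k). Then the 1-form Σ_j H_j dλ_j is closed, i.e.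 for all j, l and all x ∈ Ω: ∂H_j/∂λ_l (x) = ∂H_l/∂λ_j (x). -/
attribute [local instance] Matrix.normedAddCommGroup Matrix.normedSpace

/-!
For `j ≠ l` one computes `∂H_j/∂λ_l = tr(A_j A_l)/(λ_j - λ_l)²`, which is symmetric in `j` and `l`.
Differentiating `H_j` gives this term (from the denominator `λ_j - λ_l`) plus terms containing
`∂A_k/∂λ_l`. After substituting the Schlesinger equations, the latter reduce to multiples of the
cubic traces `c_k = tr(A_j A_l A_k) - tr(A_j A_k A_l)`, and the coefficient of each `c_k` vanishes
by the partial-fraction identity for the three points `λ_j, λ_l, λ_k`.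
-/

open Finset Function

theorem inv_sub_mul_inv_sub_eq {𝕜 : Type*} [Field 𝕜] {a b c : 𝕜}
    (hab : a ≠ b) (hac : a ≠ c) (hbc : b ≠ c) :
    (a - b)⁻¹ * (b - c)⁻¹ = (a - c)⁻¹ * ((a - b)⁻¹ + (b - c)⁻¹) := by
  have := sub_ne_zero.2 hab
  have := sub_ne_zero.2 hac
  have := sub_ne_zero.2 hbc
  field_simp
  ring

-- `M k = A_k(x)` and `D k = ∂A_k/∂λ_l (x)`, subject to the Schlesinger equations.
theorem sum_inv_sub_mul_trace_schlesinger_eq_zero {ι m 𝕜 : Type*} [Field 𝕜] [Fintype ι]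
    [DecidableEq ι] [Fintype m] {x : ι → 𝕜} (hx : Injective x) {M D : ι → Matrix m m 𝕜}
    {j l : ι} (hjl : j ≠ l)
    (hD : ∀ k, k ≠ l → D k = (x k - x l)⁻¹ • (M k * M l - M l * M k))
    (hDl : D l = -∑ k ∈ univ \ {l}, (x l - x k)⁻¹ • (M l * M k - M k * M l)) :
    ∑ k ∈ univ \ {j}, (x j - x k)⁻¹ * ((D j * M k).trace + (M j * D k).trace) = 0 := by
  obtain ⟨c, hc⟩ : ∃ c : ι → 𝕜, ∀ k, c k = (M j * M l * M k).trace - (M j * M k * M l).trace :=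
    ⟨_, fun _ => rfl⟩
  have hcj : c j = 0 := by rw [hc, Matrix.trace_mul_cycle (M j) (M l) (M j), sub_self]
  have hcl : c l = 0 := by rw [hc, sub_self]
  have hDj k : (D j * M k).trace = (x j - x l)⁻¹ * c k := by
    rw [hD j hjl, hc, Matrix.trace_mul_cycle (M j) (M k) (M l)]
    simp only [Matrix.smul_mul, Matrix.sub_mul, Matrix.trace_smul, Matrix.trace_sub, smul_eq_mul]
  have hMD k (hk : k ≠ l) : (M j * D k).trace = (x l - x k)⁻¹ * c k := by
    rw [hD k hk, hc, ← neg_sub (x k), inv_neg, neg_mul, ← mul_neg, neg_sub]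
    simp only [Matrix.mul_smul, Matrix.mul_sub, Matrix.trace_smul, Matrix.trace_sub, smul_eq_mul,
      Matrix.mul_assoc]
  have hMDl : (M j * D l).trace = -∑ k ∈ univ \ {j, l}, (x l - x k)⁻¹ * c k := by
    have hsub : univ \ {j, l} ⊆ univ \ {l} := sdiff_subset_sdiff subset_rfl (by simp)
    calc (M j * D l).trace = -∑ k ∈ univ \ {l}, (x l - x k)⁻¹ * c k := by
          rw [hDl, Matrix.mul_neg, Matrix.trace_neg, Matrix.mul_sum, Matrix.trace_sum]
          simp only [Matrix.mul_smul, Matrix.mul_sub, Matrix.trace_smul, Matrix.trace_sub,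
            smul_eq_mul, Matrix.mul_assoc, hc]
      _ = -∑ k ∈ univ \ {j, l}, (x l - x k)⁻¹ * c k := by
          rw [sum_subset hsub fun k _ hk => ?_]
          obtain rfl : k = j := by simp_all
          rw [hcj, mul_zero]
  have hsplit : univ \ {j} = insert l (univ \ {j, l}) := by
    ext k; rcases eq_or_ne k l with rfl | hkl <;> simp [hjl.symm, *]
  calc ∑ k ∈ univ \ {j}, (x j - x k)⁻¹ * ((D j * M k).trace + (M j * D k).trace)
      = (x j - x l)⁻¹ * (M j * D l).trace + ∑ k ∈ univ \ {j, l},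
          ((x j - x k)⁻¹ * (x j - x l)⁻¹ + (x j - x k)⁻¹ * (x l - x k)⁻¹) * c k := by
        rw [hsplit, sum_insert (by simp), hDj l, hcl, mul_zero, zero_add]
        congr 1
        refine sum_congr rfl fun k hk => ?_
        rw [hDj k, hMD k (by simp_all)]
        ring
    _ = ∑ k ∈ univ \ {j, l}, ((x j - x k)⁻¹ * (x j - x l)⁻¹ + (x j - x k)⁻¹ * (x l - x k)⁻¹
          - (x j - x l)⁻¹ * (x l - x k)⁻¹) * c k := by
        rw [hMDl, mul_neg, mul_sum, ← sub_eq_neg_add, ← sum_sub_distrib]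
        refine sum_congr rfl fun k _ => by ring
    _ = 0 := by
        refine sum_eq_zero fun k hk => ?_
        simp only [mem_sdiff, mem_univ, mem_insert, mem_singleton, true_and, not_or] at hk
        rw [inv_sub_mul_inv_sub_eq (hx.ne hjl) (hx.ne (Ne.symm hk.1)) (hx.ne (Ne.symm hk.2))]
        ring

theorem HasDerivAt.trace_mul {𝕜 m : Type*} [NontriviallyNormedField 𝕜] [Fintype m]
    {f g : 𝕜 → Matrix m m 𝕜} {f' g' : Matrix m m 𝕜} {t : 𝕜}
    (hf : HasDerivAt f f' t) (hg : HasDerivAt g g' t) :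
    HasDerivAt (fun s => (f s * g s).trace) ((f' * g t).trace + (f t * g').trace) t := by
  have entry {h : 𝕜 → Matrix m m 𝕜} {h'} (hh : HasDerivAt h h' t) (p q : m) :
      HasDerivAt (fun s => h s p q) (h' p q) t :=
    hasDerivAt_pi.1 (hasDerivAt_pi.1 hh p) q
  have := HasDerivAt.fun_sum fun p (_ : p ∈ univ) =>
    HasDerivAt.fun_sum fun q (_ : q ∈ univ) => (entry hf p q).mul (entry hg q p)
  simpa [Matrix.trace, Matrix.mul_apply, sum_add_distrib] using this

theorem hasDerivAt_pdv {n : ℕ} {E : Type*} [NormedAddCommGroup E] [NormedSpace ℂ E]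
    {f : (Fin n → ℂ) → E} {x : Fin n → ℂ} (k : Fin n) (hf : DifferentiableAt ℂ f x) :
    HasDerivAt (fun t => f (update x k t)) (pdv k f x) (x k) := by
  rw [← update_eq_self k x] at hf
  exact (hf.comp (x k) (hasDerivAt_update x k (x k)).differentiableAt).hasDerivAt

theorem pdv_sum_inv_sub_mul_trace {n : ℕ} {m : Type*} [Fintype m]
    {A : Fin n → (Fin n → ℂ) → Matrix m m ℂ} {x : Fin n → ℂ} (hx : Injective x)
    (hA : ∀ k, DifferentiableAt ℂ (A k) x) {j l : Fin n} (hjl : j ≠ l) :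
    pdv l (fun y => ∑ k ∈ univ \ {j}, (y j - y k)⁻¹ * (A j y * A k y).trace) x
      = ((x j - x l) ^ 2)⁻¹ * (A j x * A l x).trace + ∑ k ∈ univ \ {j},
          (x j - x k)⁻¹ * ((pdv l (A j) x * A k x).trace + (A j x * pdv l (A k) x).trace) := by
  have hcoord k : HasDerivAt (fun t => update x l t k) ((Pi.single l 1 : Fin n → ℂ) k) (x l) :=
    hasDerivAt_pi.1 (hasDerivAt_update x l (x l)) k
  have hcoef k (hk : k ∈ univ \ {j}) : HasDerivAt (fun t => (update x l t j - update x l t k)⁻¹)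
      ((Pi.single l 1 : Fin n → ℂ) k / (x j - x k) ^ 2) (x l) := by
    have hne : update x l (x l) j - update x l (x l) k ≠ 0 := by
      rw [update_eq_self, sub_ne_zero]
      exact hx.ne (by simpa [eq_comm] using hk)
    refine (((hcoord j).fun_sub (hcoord k)).inv hne).congr_deriv ?_
    simp [Pi.single_apply, hjl, update_eq_self]
  have hsum := HasDerivAt.fun_sum fun k hk =>
    (hcoef k hk).fun_mul ((hasDerivAt_pdv l (hA j)).trace_mul (hasDerivAt_pdv l (hA k)))
  simp only [update_eq_self] at hsum
  rw [pdv, hsum.deriv, sum_add_distrib]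
  congr 1
  rw [sum_eq_single_of_mem l (by simp [hjl.symm]) fun k _ hk => by simp [hk]]
  simp

theorem tau_form_closed_general {n N : ℕ}
    (Ω : Set (Fin n → ℂ)) (hΩ : IsOpen Ω)
    (hdist : ∀ x ∈ Ω, ∀ j k : Fin n, j ≠ k → x j ≠ x k)
    (A : Fin n → (Fin n → ℂ) → Matrix (Fin N) (Fin N) ℂ)
    (hA : ∀ j, DifferentiableOn ℂ (A j) Ω)
    (hSch₁ : ∀ x ∈ Ω, ∀ j k : Fin n, j ≠ k →
      pdv k (A j) x = (x j - x k)⁻¹ • (A j x * A k x - A k x * A j x))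
    (hSch₂ : ∀ x ∈ Ω, ∀ j : Fin n,
      pdv j (A j) x = -∑ k ∈ Finset.univ \ {j},
        (x j - x k)⁻¹ • (A j x * A k x - A k x * A j x))
    (H : Fin n → (Fin n → ℂ) → ℂ)
    (hH : ∀ j x, H j x = ∑ k ∈ Finset.univ \ {j},
      (x j - x k)⁻¹ * (A j x * A k x).trace) :
    ∀ j l : Fin n, ∀ x ∈ Ω, pdv l (H j) x = pdv j (H l) x := by
  intro j l x hx
  obtain rfl | hjl := eq_or_ne j l
  · rfl
  have hinj : Injective x := fun a b hab => by_contra fun h => hdist x hx a b h hab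
  have hAx k : DifferentiableAt ℂ (A k) x := (hA k).differentiableAt (hΩ.mem_nhds hx)
  have hpdv j l (hjl : j ≠ l) : pdv l (H j) x = ((x j - x l) ^ 2)⁻¹ * (A j x * A l x).trace := by
    rw [funext (hH j), pdv_sum_inv_sub_mul_trace hinj hAx hjl,
      sum_inv_sub_mul_trace_schlesinger_eq_zero hinj hjl (fun k hk => hSch₁ x hx k l hk)
        (hSch₂ x hx l), add_zero]
  rw [hpdv j l hjl, hpdv l j hjl.symm, ← neg_sub (x j), neg_sq, Matrix.trace_mul_comm]

/-- For a solution of the Schlesinger system, the 1-form `Σ_j H_j dλ_j` with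
`H_j = Σ_{k≠j} tr(A_jA_k)/(λ_j−λ_k)` is closed; hence the Jimbo–Miwa
τ-function is locally well defined. -/
theorem tau_form_closed {n N : ℕ} (hn : 2 ≤ n) (hN : 1 ≤ N)
    (Ω : Set (Fin n → ℂ)) (hΩ : IsOpen Ω)
    (hdist : ∀ x ∈ Ω, ∀ j k : Fin n, j ≠ k → x j ≠ x k)
    (A : Fin n → (Fin n → ℂ) → Matrix (Fin N) (Fin N) ℂ)
    (hA : ∀ j, DifferentiableOn ℂ (A j) Ω)
    (hA' : ∀ j k : Fin n, DifferentiableOn ℂ (pdv k (A j)) Ω)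
    (hSch₁ : ∀ x ∈ Ω, ∀ j k : Fin n, j ≠ k →
      pdv k (A j) x = (x j - x k)⁻¹ • (A j x * A k x - A k x * A j x))
    (hSch₂ : ∀ x ∈ Ω, ∀ j : Fin n,
      pdv j (A j) x = -∑ k ∈ Finset.univ \ {j},
        (x j - x k)⁻¹ • (A j x * A k x - A k x * A j x))
    (H : Fin n → (Fin n → ℂ) → ℂ)
    (hH : ∀ j x, H j x = ∑ k ∈ Finset.univ \ {j},
      (x j - x k)⁻¹ * (A j x * A k x).trace) :
    ∀ j l : Fin n, ∀ x ∈ Ω, pdv l (H j) x = pdv j (H l) x :=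
  tau_form_closed_general Ω hΩ hdist A hA hSch₁ hSch₂ H hH
end

section
/- Let Φ : ℂ → Matrix (Fin 2) (Fin 2) ℂ and f : ℂ → ℂ be differentiable at a point λ ∈ ℂ, and suppose that f(z)²·det Φ(z) = 1 for all z in some neighborhood of λ (in particular det Φ(λ) ≠ 0 and f(λ) ≠ 0). Set Ψ(z) = f(z)·Φ(z). Then Ψ(λ) is invertible and (1/2)·tr((Ψ'(λ)·Ψ(λ)⁻¹)²) = −det(Φ'(λ))/det(Φ(λ)) + (1/4)·( (d/dz det Φ(z))|_{z=λ} / det Φ(λ) )², where Ψ'(λ) and Φ'(λ) denote the complex derivatives at λ. -/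
/-!
Since `Ψ = f • Φ`, we have `Ψ' Ψ⁻¹ = (f'/f) • 1 + M` with `M = Φ' Φ⁻¹`. Differentiating
`f² det Φ = 1` and using Jacobi's formula `(det Φ)'/det Φ = tr M` gives `f'/f = -tr M / 2`, so
`Ψ' Ψ⁻¹` is the traceless part of `M`. For a traceless `2 × 2` matrix `X`, `tr X² = -2 det X`, and
`det (M - (tr M / 2) • 1) = det M - (tr M)² / 4`, where `det M = det Φ' / det Φ`.
-/

attribute [local instance] Matrix.normedAddCommGroup Matrix.normedSpace

open Filter Topology

namespace Matrix

variable {R : Type*} [CommRing R]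

theorem trace_sq_fin_two (X : Matrix (Fin 2) (Fin 2) R) :
    (X ^ 2).trace = X.trace ^ 2 - 2 * X.det := by
  simp only [sq, trace_fin_two, det_fin_two, mul_apply, Fin.sum_univ_two]
  ring

theorem det_smul_one_add_fin_two (c : R) (M : Matrix (Fin 2) (Fin 2) R) :
    (c • 1 + M).det = c ^ 2 + c * M.trace + M.det := by
  simp only [det_fin_two, trace_fin_two, add_apply, smul_apply, smul_eq_mul, one_apply_eq,
    one_apply_ne zero_ne_one, one_apply_ne one_ne_zero]
  ring

theorem half_trace_sq_smul_one_add_fin_two {K : Type*} [Field K] [NeZero (2 : K)] {c : K}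
    {M : Matrix (Fin 2) (Fin 2) K} (h : 2 * c + M.trace = 0) :
    (1 / 2 : K) * ((c • 1 + M) ^ 2).trace = -M.det + (1 / 4 : K) * M.trace ^ 2 := by
  have hc : c = -M.trace / 2 := by
    rw [eq_div_iff two_ne_zero]
    linear_combination h
  have htrace : (c • 1 + M).trace = 0 := by
    rw [trace_add, trace_smul, trace_one, Fintype.card_fin, ← h, smul_eq_mul]
    push_cast
    ring
  rw [trace_sq_fin_two, htrace, det_smul_one_add_fin_two, hc,
    show (1 / 4 : K) = (1 / 2) ^ 2 by norm_num]
  field_simp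
  ring

variable {𝕜 : Type*} [NontriviallyNormedField 𝕜]

theorem hasDerivAt_det_fin_two {Φ : 𝕜 → Matrix (Fin 2) (Fin 2) 𝕜} {Φ' : Matrix (Fin 2) (Fin 2) 𝕜}
    {x : 𝕜} (h : HasDerivAt Φ Φ' x) :
    HasDerivAt (fun z => (Φ z).det) ((Φ x).adjugate * Φ').trace x := by
  have hentry (i j : Fin 2) : HasDerivAt (fun z => Φ z i j) (Φ' i j) x :=
    hasDerivAt_pi.1 (hasDerivAt_pi.1 h i) j
  rw [funext fun z => det_fin_two (Φ z)]
  refine (((hentry 0 0).fun_mul (hentry 1 1)).fun_sub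
    ((hentry 0 1).fun_mul (hentry 1 0))).congr_deriv ?_
  rw [adjugate_fin_two, trace_fin_two, mul_apply, mul_apply]
  simp only [of_apply, cons_val', cons_val_fin_one, cons_val_zero, cons_val_one,
    Fin.sum_univ_two]
  ring

theorem logDeriv_det_fin_two {Φ : 𝕜 → Matrix (Fin 2) (Fin 2) 𝕜} {x : 𝕜}
    (h : DifferentiableAt 𝕜 Φ x) :
    logDeriv (fun z => (Φ z).det) x = (deriv Φ x * (Φ x)⁻¹).trace := by
  rw [logDeriv_apply, (hasDerivAt_det_fin_two h.hasDerivAt).deriv, inv_def, mul_smul_comm,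
    trace_smul, trace_mul_comm, Ring.inverse_eq_inv', smul_eq_mul]
  exact div_eq_inv_mul _ _

theorem deriv_smul_mul_inv_smul {n : Type*} [Fintype n] [DecidableEq n] {f : 𝕜 → 𝕜}
    {Φ : 𝕜 → Matrix n n 𝕜} {x : 𝕜} (hf : DifferentiableAt 𝕜 f x) (hΦ : DifferentiableAt 𝕜 Φ x)
    (hfx : f x ≠ 0) (hΦx : IsUnit (Φ x).det) :
    deriv (fun z => f z • Φ z) x * (f x • Φ x)⁻¹ = logDeriv f x • 1 + deriv Φ x * (Φ x)⁻¹ := by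
  have hderiv : deriv (fun z => f z • Φ z) x = f x • deriv Φ x + deriv f x • Φ x :=
    deriv_fun_smul hf hΦ
  have hinv : (f x • Φ x)⁻¹ = (f x)⁻¹ • (Φ x)⁻¹ :=
    inv_eq_left_inv <| by
      rw [smul_mul_smul_comm, inv_mul_cancel₀ hfx, one_smul, nonsing_inv_mul _ hΦx]
  rw [hderiv, hinv, add_mul, smul_mul_smul_comm, smul_mul_smul_comm, mul_nonsing_inv _ hΦx,
    mul_inv_cancel₀ hfx, one_smul, add_comm, logDeriv_apply, div_eq_mul_inv]

end Matrix

theorem natCast_mul_logDeriv_add_logDeriv_eq_zero {𝕜 𝕜' : Type*} [NontriviallyNormedField 𝕜]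
    [NontriviallyNormedField 𝕜'] [NormedAlgebra 𝕜 𝕜'] {f g : 𝕜 → 𝕜'} {x : 𝕜} (n : ℕ)
    (hf : DifferentiableAt 𝕜 f x) (hg : DifferentiableAt 𝕜 g x)
    (h : ∀ᶠ z in 𝓝 x, f z ^ n * g z = 1) :
    n * logDeriv f x + logDeriv g x = 0 := by
  have hx : f x ^ n * g x = 1 := h.self_of_nhds
  calc n * logDeriv f x + logDeriv g x = logDeriv (fun z => f z ^ n * g z) x := by
        rw [logDeriv_mul x (left_ne_zero_of_mul_eq_one hx) (right_ne_zero_of_mul_eq_one hx)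
          (hf.fun_pow n) hg, logDeriv_fun_pow hf]
    _ = logDeriv (fun _ => (1 : 𝕜')) x := (logDeriv_congr_nhds h).self_of_nhds
    _ = 0 := by rw [logDeriv_const, Pi.zero_apply]

/-- If `Ψ = f·Φ` is the scalar normalization of a 2×2 matrix function `Φ` with
`f²·det Φ ≡ 1` near `λ`, then `Ψ(λ)` is invertible and
`(1/2)tr((Ψ'Ψ^{−1})²) = −det(Φ')/det Φ + (1/4)((det Φ)'/det Φ)²` at `λ`. -/
theorem normalized_trace_square_formula
    (Φ : ℂ → Matrix (Fin 2) (Fin 2) ℂ) (f : ℂ → ℂ) (lam : ℂ)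
    (hΦ : DifferentiableAt ℂ Φ lam) (hf : DifferentiableAt ℂ f lam)
    (hdet : ∀ᶠ z in 𝓝 lam, f z ^ 2 * (Φ z).det = 1)
    (Ψ : ℂ → Matrix (Fin 2) (Fin 2) ℂ) (hΨ : ∀ z, Ψ z = f z • Φ z) :
    IsUnit (Ψ lam) ∧
    (1 / 2 : ℂ) * ((deriv Ψ lam * (Ψ lam)⁻¹) ^ 2).trace =
      -(deriv Φ lam).det / (Φ lam).det +
        (1 / 4 : ℂ) * (deriv (fun z => (Φ z).det) lam / (Φ lam).det) ^ 2 := by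
  have h1 : f lam ^ 2 * (Φ lam).det = 1 := hdet.self_of_nhds
  have hf0 : f lam ≠ 0 := pow_ne_zero_iff two_ne_zero |>.mp (left_ne_zero_of_mul_eq_one h1)
  have hd0 : (Φ lam).det ≠ 0 := right_ne_zero_of_mul_eq_one h1
  have htraceless : 2 * logDeriv f lam + (deriv Φ lam * (Φ lam)⁻¹).trace = 0 := by
    rw [← Matrix.logDeriv_det_fin_two hΦ]
    exact_mod_cast natCast_mul_logDeriv_add_logDeriv_eq_zero 2 hf
      (Matrix.hasDerivAt_det_fin_two hΦ.hasDerivAt).differentiableAt hdet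
  refine ⟨?_, ?_⟩
  · rw [Matrix.isUnit_iff_isUnit_det, hΨ, Matrix.det_smul, Fintype.card_fin, h1]
    exact isUnit_one
  rw [funext hΨ, Matrix.deriv_smul_mul_inv_smul hf hΦ hf0 hd0.isUnit,
    Matrix.half_trace_sq_smul_one_add_fin_two htraceless, ← Matrix.logDeriv_det_fin_two hΦ,
    logDeriv_apply, Matrix.det_mul, Matrix.det_nonsing_inv, Ring.inverse_eq_inv']
  ring
end
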